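/- Let Δ ≥ 2 be even and let G be a simple graph with no isolated vertices satisfying ν(G) = Δ/2, Δ(G) = Δ, and |E(G)| = (Δ+1)Δ/2. Then G is isomorphic to the complete graph K_{Δ+1}. -/

import Mathlib

open scoped Classical

/-- `M` is a matching of `G`, given as a finite set of edges. -/
def IsMatchingFinset {V : Type*} (G : SimpleGraph V) (M : Finset (Sym2 V)) : Prop :=
  (M : Set (Sym2 V)) ⊆ G.edgeSet ∧
    ∀ e ∈ M, ∀ f ∈ M, e ≠ f → ∀ v : V, ¬(v ∈ e ∧ v ∈ f)

/-- ν(G): the maximum size of a matching of `G`. -/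
noncomputable def matchingNumber {V : Type*} (G : SimpleGraph V) : ℕ :=
  sSup {n | ∃ M : Finset (Sym2 V), IsMatchingFinset G M ∧ M.card = n}

/-- A proper edge coloring of `G` using colors `< n`. -/
def IsProperEdgeColoring {V : Type*} (G : SimpleGraph V) (n : ℕ) (c : Sym2 V → ℕ) : Prop :=
  (∀ e ∈ G.edgeSet, c e < n) ∧
    ∀ e ∈ G.edgeSet, ∀ f ∈ G.edgeSet, e ≠ f → (∃ v : V, v ∈ e ∧ v ∈ f) → c e ≠ c f

/-- χ'(G): the edge chromatic index of `G`. -/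
noncomputable def chromaticIndex {V : Type*} (G : SimpleGraph V) : ℕ :=
  sInf {n | ∃ c : Sym2 V → ℕ, IsProperEdgeColoring G n c}

/-- `G` is friendly-edge-colorable: its edge set is partitioned into maximum matchings. -/
noncomputable def Friendly {V : Type*} [Fintype V] (G : SimpleGraph V) : Prop :=
  ∃ P : Finset (Finset (Sym2 V)),
    (∀ M ∈ P, IsMatchingFinset G M ∧ M.card = matchingNumber G) ∧
    (∀ e, e ∈ G.edgeFinset ↔ ∃ M ∈ P, e ∈ M) ∧
    ∀ M ∈ P, ∀ N ∈ P, M ≠ N → Disjoint M N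

/-- The graph `G` with vertex `x` deleted. -/
def delVert {V : Type*} (G : SimpleGraph V) (x : V) : SimpleGraph {v : V // v ≠ x} :=
  G.induce {v : V | v ≠ x}

/-- `G` has a perfect matching. -/
def HasPerfectMatchingFinset {V : Type*} (G : SimpleGraph V) : Prop :=
  ∃ M : Finset (Sym2 V), IsMatchingFinset G M ∧ ∀ v : V, ∃ e ∈ M, v ∈ e

/-- `G` is factor-critical. -/
def FactorCritical {V : Type*} (G : SimpleGraph V) : Prop :=
  G.Connected ∧ ∀ x : V, HasPerfectMatchingFinset (delVert G x)

/-! Write `Δ = 2k` and enlarge `G` to an edge-maximal graph `H` with `ν(H) ≤ k`. By Gallai's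
alternating-path argument, every vertex of `H` that is not adjacent to all others has a clique as
neighbourhood, so these vertices induce a disjoint union of cliques in `H`. A clique on `c` vertices
has a matching of size `⌊c/2⌋ ≤ k`; together these form a matching of size `m`, and the cliques
carry at most `(2k+1)m` edges. Let `A` be the set of dominating vertices of `H`. If `A` is empty,
no vertex is isolated, so every clique has at least two vertices, and a finer count gives
`|E| + k|V| ≤ 2(2k+1)m ≤ 2(2k+1)k`. Otherwise, if `|V| ≥ 2k + 2`, the vertices of `A` can be
matched to vertices missed by the clique matching, so `|A| + m ≤ k` and
`|E| ≤ 2k|A| + (2k+1)m < k(2k+1)`. Hence `|V| ≤ 2k + 1`, and `|E| = k(2k+1) = (2k+1).choose 2`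
forces `G = K_{2k+1}`. -/

open Finset

section Matchings

variable {V : Type*}

noncomputable def coveredVertices (M : Finset (Sym2 V)) : Finset V := M.biUnion Sym2.toFinset

@[simp]
lemma mem_coveredVertices {M : Finset (Sym2 V)} {v : V} :
    v ∈ coveredVertices M ↔ ∃ e ∈ M, v ∈ e := by
  simp [coveredVertices]

lemma coveredVertices_mono {M N : Finset (Sym2 V)} (h : M ⊆ N) :
    coveredVertices M ⊆ coveredVertices N :=
  biUnion_subset_biUnion_of_subset_left _ h

lemma coveredVertices_insert (a b : V) (M : Finset (Sym2 V)) :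
    coveredVertices (insert s(a, b) M) = insert a (insert b (coveredVertices M)) := by
  ext v; simp [or_assoc]

lemma coveredVertices_union (M N : Finset (Sym2 V)) :
    coveredVertices (M ∪ N) = coveredVertices M ∪ coveredVertices N :=
  union_biUnion

lemma card_coveredVertices_le (M : Finset (Sym2 V)) : #(coveredVertices M) ≤ 2 * #M := by
  refine card_biUnion_le.trans ?_
  rw [mul_comm, ← smul_eq_mul, ← sum_const]
  refine sum_le_sum fun e _ => ?_
  rw [Sym2.card_toFinset]
  split_ifs <;> omega

lemma card_insert_of_notMem_coveredVertices {M : Finset (Sym2 V)} {a : V} (b : V)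
    (ha : a ∉ coveredVertices M) : #(insert s(a, b) M) = #M + 1 :=
  card_insert_of_notMem fun h => ha (mem_coveredVertices.2 ⟨_, h, Sym2.mem_mk_left a b⟩)

lemma card_union_of_disjoint_coveredVertices {M N : Finset (Sym2 V)}
    (h : Disjoint (coveredVertices M) (coveredVertices N)) : #(M ∪ N) = #M + #N := by
  refine card_union_of_disjoint (disjoint_left.2 fun e heM heN => ?_)
  induction e using Sym2.ind with
  | _ v w =>
    exact disjoint_left.1 h (mem_coveredVertices.2 ⟨_, heM, Sym2.mem_mk_left v w⟩)
      (mem_coveredVertices.2 ⟨_, heN, Sym2.mem_mk_left v w⟩)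

namespace IsMatchingFinset

variable {G : SimpleGraph V} {M N : Finset (Sym2 V)}

lemma empty : IsMatchingFinset G ∅ := ⟨by simp, by simp⟩

lemma mono (hM : IsMatchingFinset G M) (h : N ⊆ M) : IsMatchingFinset G N :=
  ⟨(coe_subset.2 h).trans hM.1, fun e he f hf => hM.2 e (h he) f (h hf)⟩

lemma eq_of_mem {e f : Sym2 V} {v : V} (hM : IsMatchingFinset G M) (he : e ∈ M) (hf : f ∈ M)
    (hve : v ∈ e) (hvf : v ∈ f) : e = f := by
  by_contra hef
  exact hM.2 e he f hf hef v ⟨hve, hvf⟩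

lemma adj {a b : V} (hM : IsMatchingFinset G M) (h : s(a, b) ∈ M) : G.Adj a b :=
  hM.1 h

lemma exists_adj_of_mem_coveredVertices {a : V} (hM : IsMatchingFinset G M)
    (ha : a ∈ coveredVertices M) : ∃ b, s(a, b) ∈ M ∧ G.Adj a b := by
  obtain ⟨e, he, hae⟩ := mem_coveredVertices.1 ha
  obtain ⟨b, rfl⟩ := Sym2.mem_iff_exists.1 hae
  exact ⟨b, he, hM.adj he⟩

lemma notMem_coveredVertices_erase {e : Sym2 V} {v : V} (hM : IsMatchingFinset G M)
    (he : e ∈ M) (hv : v ∈ e) : v ∉ coveredVertices (M.erase e) := by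
  simp only [mem_coveredVertices, mem_erase, not_exists, not_and]
  exact fun f ⟨hfe, hf⟩ hvf => hfe (hM.eq_of_mem hf he hvf hv)

lemma insert_edge {a b : V} (hM : IsMatchingFinset G M) (hab : G.Adj a b)
    (ha : a ∉ coveredVertices M) (hb : b ∉ coveredVertices M) :
    IsMatchingFinset G (insert s(a, b) M) := by
  have hfresh : ∀ f ∈ M, ∀ v ∈ s(a, b), v ∉ f := by
    intro f hf v hv hvf
    rcases Sym2.mem_iff.1 hv with rfl | rfl
    exacts [ha (mem_coveredVertices.2 ⟨f, hf, hvf⟩), hb (mem_coveredVertices.2 ⟨f, hf, hvf⟩)]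
  refine ⟨?_, ?_⟩
  · rw [coe_insert, Set.insert_subset_iff]
    exact ⟨hab, hM.1⟩
  · simp only [mem_insert]
    rintro e (rfl | he) f (rfl | hf) hef v ⟨hve, hvf⟩
    · exact hef rfl
    · exact hfresh f hf v hve hvf
    · exact hfresh e he v hvf hve
    · exact hM.2 e he f hf hef v ⟨hve, hvf⟩

lemma union (hM : IsMatchingFinset G M) (hN : IsMatchingFinset G N)
    (h : Disjoint (coveredVertices M) (coveredVertices N)) : IsMatchingFinset G (M ∪ N) := by
  have hsep : ∀ e ∈ M, ∀ f ∈ N, ∀ v, ¬(v ∈ e ∧ v ∈ f) := fun e he f hf v hv =>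
    disjoint_left.1 h (mem_coveredVertices.2 ⟨e, he, hv.1⟩) (mem_coveredVertices.2 ⟨f, hf, hv.2⟩)
  refine ⟨by rw [coe_union]; exact Set.union_subset hM.1 hN.1, ?_⟩
  simp only [mem_union]
  rintro e (he | he) f (hf | hf) hef v hv
  · exact hM.2 e he f hf hef v hv
  · exact hsep e he f hf v hv
  · exact hsep f hf e he v hv.symm
  · exact hN.2 e he f hf hef v hv

/-- Following the `M₁`/`M₂`-alternating path that starts at `y` with an edge of `M₁`: it either
ends with an edge of `M₁`, and switching along it augments `M₂`, or it ends with an edge of `M₂`,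
and switching along it moves `M₁` off `y` at the price of covering the last vertex `t`. -/
theorem augment_or_exchange {M₁ M₂ : Finset (Sym2 V)} (h₁ : IsMatchingFinset G M₁)
    (h₂ : IsMatchingFinset G M₂) {y : V} (hy : y ∉ coveredVertices M₂) :
    (∃ N, IsMatchingFinset G N ∧ #N = #M₂ + 1 ∧
      coveredVertices N ⊆ coveredVertices M₁ ∪ coveredVertices M₂) ∨
    (∃ M₃ t, IsMatchingFinset G M₃ ∧ #M₃ = #M₁ ∧ y ∉ coveredVertices M₃ ∧
      coveredVertices M₃ ⊆ coveredVertices M₁ ∪ coveredVertices M₂ ∧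
      coveredVertices M₃ ⊆ insert t (coveredVertices M₁)) := by
  induction M₁ using Finset.strongInduction generalizing M₂ y with
  | H M₁ ih =>
  by_cases hy₁ : y ∉ coveredVertices M₁
  · exact .inr ⟨M₁, y, h₁, rfl, hy₁, subset_union_left, subset_insert _ _⟩
  rw [not_not] at hy₁
  obtain ⟨v, hyv, hadj⟩ := h₁.exists_adj_of_mem_coveredVertices hy₁
  have hv₁ : v ∈ coveredVertices M₁ := mem_coveredVertices.2 ⟨_, hyv, Sym2.mem_mk_right y v⟩
  by_cases hv₂ : v ∉ coveredVertices M₂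
  · refine .inl ⟨_, h₂.insert_edge hadj hy hv₂, card_insert_of_notMem_coveredVertices v hy, ?_⟩
    simp only [coveredVertices_insert, insert_subset_iff]
    exact ⟨mem_union_left _ hy₁, mem_union_left _ hv₁, subset_union_right⟩
  rw [not_not] at hv₂
  obtain ⟨v', hvv', hadj'⟩ := h₂.exists_adj_of_mem_coveredVertices hv₂
  have hv'₂ : v' ∈ coveredVertices M₂ := mem_coveredVertices.2 ⟨_, hvv', Sym2.mem_mk_right v v'⟩
  have hyv' : y ≠ v' := by rintro rfl; exact hy hv'₂
  have hyM₁ := h₁.notMem_coveredVertices_erase hyv (Sym2.mem_mk_left y v)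
  have hvM₁ := h₁.notMem_coveredVertices_erase hyv (Sym2.mem_mk_right y v)
  have hvM₂ := h₂.notMem_coveredVertices_erase hvv' (Sym2.mem_mk_left v v')
  have hv'M₂ := h₂.notMem_coveredVertices_erase hvv' (Sym2.mem_mk_right v v')
  have hcov₁ := coveredVertices_mono (M₁.erase_subset s(y, v))
  have hcov₂ := coveredVertices_mono (M₂.erase_subset s(v, v'))
  have hcard₁ := card_erase_add_one hyv
  have hcard₂ := card_erase_add_one hvv'
  have h₁' := h₁.mono (M₁.erase_subset s(y, v))
  by_cases hv'₁ : v' ∉ coveredVertices M₁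
  · have hv'M₁ : v' ∉ coveredVertices (M₁.erase s(y, v)) := fun h => hv'₁ (hcov₁ h)
    refine .inr ⟨_, v', h₁'.insert_edge hadj' hvM₁ hv'M₁,
      by rw [card_insert_of_notMem_coveredVertices _ hvM₁, hcard₁], ?_, ?_, ?_⟩ <;>
      simp only [coveredVertices_insert, insert_subset_iff, mem_insert, not_or]
    · exact ⟨hadj.ne, hyv', hyM₁⟩
    · exact ⟨mem_union_left _ hv₁, mem_union_right _ hv'₂, hcov₁.trans subset_union_left⟩
    · exact ⟨.inr hv₁, .inl trivial, hcov₁.trans (subset_insert _ _)⟩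
  rw [not_not] at hv'₁
  have hcov := union_subset_union hcov₁ hcov₂
  rcases ih _ (erase_ssubset hyv) h₁' (h₂.mono (M₂.erase_subset _)) hv'M₂ with
    ⟨N, hN, hNc, hNs⟩ | ⟨M₃, t, hM₃, hM₃c, hv'M₃, hM₃s, hM₃t⟩
  · have hyN : y ∉ coveredVertices N := fun h => by
      rcases mem_union.1 (hNs h) with h | h
      exacts [hyM₁ h, hy (hcov₂ h)]
    have hvN : v ∉ coveredVertices N := fun h => by
      rcases mem_union.1 (hNs h) with h | h
      exacts [hvM₁ h, hvM₂ h]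
    refine .inl ⟨_, hN.insert_edge hadj hyN hvN,
      by rw [card_insert_of_notMem_coveredVertices _ hyN, hNc, hcard₂], ?_⟩
    simp only [coveredVertices_insert, insert_subset_iff]
    exact ⟨mem_union_left _ hy₁, mem_union_left _ hv₁, hNs.trans hcov⟩
  · have hvM₃ : v ∉ coveredVertices M₃ := fun h => by
      rcases mem_union.1 (hM₃s h) with h | h
      exacts [hvM₁ h, hvM₂ h]
    have hyM₃ : y ∉ coveredVertices M₃ := fun h => by
      rcases mem_union.1 (hM₃s h) with h | h
      exacts [hyM₁ h, hy (hcov₂ h)]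
    refine .inr ⟨_, t, hM₃.insert_edge hadj' hvM₃ hv'M₃,
      by rw [card_insert_of_notMem_coveredVertices _ hvM₃, hM₃c, hcard₁], ?_, ?_, ?_⟩ <;>
      simp only [coveredVertices_insert, insert_subset_iff, mem_insert, not_or]
    · exact ⟨hadj.ne, hyv', hyM₃⟩
    · exact ⟨mem_union_left _ hv₁, mem_union_left _ hv'₁, hM₃s.trans hcov⟩
    · exact ⟨.inr hv₁, .inr hv'₁, hM₃t.trans (insert_subset_insert _ hcov₁)⟩

end IsMatchingFinset

end Matchings

section MatchingNumber

variable {V : Type*} [Finite V] {G : SimpleGraph V}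

lemma card_le_matchingNumber {M : Finset (Sym2 V)} (hM : IsMatchingFinset G M) :
    #M ≤ matchingNumber G := by
  have : Fintype (Sym2 V) := Fintype.ofFinite _
  refine le_csSup ⟨Fintype.card (Sym2 V), ?_⟩ ⟨M, hM, rfl⟩
  rintro n ⟨N, -, rfl⟩
  exact card_le_univ N

lemma matchingNumber_le_iff {k : ℕ} :
    matchingNumber G ≤ k ↔ ∀ M, IsMatchingFinset G M → #M ≤ k :=
  ⟨fun h _ hM => (card_le_matchingNumber hM).trans h, fun h =>
    csSup_le ⟨0, ∅, .empty, rfl⟩ (by rintro n ⟨M, hM, rfl⟩; exact h M hM)⟩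

end MatchingNumber

section Maximal

variable {V : Type*} [Finite V] {H : SimpleGraph V} {k : ℕ}

lemma exists_matching_avoiding_of_maximal
    (hH : Maximal (fun H : SimpleGraph V => matchingNumber H ≤ k) H) {x y : V} (hxy : x ≠ y)
    (hn : ¬H.Adj x y) :
    ∃ M, IsMatchingFinset H M ∧ #M = k ∧ x ∉ coveredVertices M ∧ y ∉ coveredVertices M := by
  have hHk := matchingNumber_le_iff.1 hH.prop
  obtain ⟨M, hM, hkM⟩ : ∃ M, IsMatchingFinset (H ⊔ .edge x y) M ∧ k < #M := by
    simpa [matchingNumber_le_iff] using hH.not_prop_of_gt (H.lt_sup_edge x y hxy hn)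
  have hMH : IsMatchingFinset H (M.erase s(x, y)) := by
    refine ⟨fun e he => ?_, (hM.mono (erase_subset _ _)).2⟩
    obtain ⟨hne, he⟩ := mem_erase.1 he
    have := hM.1 he
    rw [SimpleGraph.edgeSet_sup, SimpleGraph.edgeSet_edge_of_ne hxy] at this
    exact this.resolve_right hne
  have hxyM : s(x, y) ∈ M := by
    by_contra h
    rw [erase_eq_of_notMem h] at hMH
    exact (hHk M hMH).not_gt hkM
  have := hHk _ hMH
  have := card_erase_add_one hxyM
  exact ⟨_, hMH, by omega, hM.notMem_coveredVertices_erase hxyM (Sym2.mem_mk_left x y),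
    hM.notMem_coveredVertices_erase hxyM (Sym2.mem_mk_right x y)⟩

/-- Gallai's lemma. Maximality provides maximum matchings missing `{x, z}` and `{y, w}`; the
alternating path from `y` either augments the second one, or yields a maximum matching missing
`y` and one of `x`, `z`, which then extends by `xy` or `zy`. -/
lemma isClique_neighborSet_of_maximal
    (hH : Maximal (fun H : SimpleGraph V => matchingNumber H ≤ k) H) {y w : V} (hwy : w ≠ y)
    (hyw : ¬H.Adj y w) : H.IsClique (H.neighborSet y) := by
  intro x hx z hz hxz
  by_contra hxz'
  have hHk := matchingNumber_le_iff.1 hH.prop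
  obtain ⟨M₁, hM₁, hM₁c, hxM₁, hzM₁⟩ := exists_matching_avoiding_of_maximal hH hxz hxz'
  obtain ⟨M₂, hM₂, hM₂c, hyM₂, -⟩ := exists_matching_avoiding_of_maximal hH hwy.symm hyw
  rcases hM₁.augment_or_exchange hM₂ hyM₂ with
    ⟨N, hN, hNc, -⟩ | ⟨M₃, t, hM₃, hM₃c, hyM₃, -, hM₃t⟩
  · have := hHk N hN
    omega
  obtain ⟨u, hu, huM₃⟩ : ∃ u, H.Adj u y ∧ u ∉ coveredVertices M₃ := by
    by_contra! h
    rcases mem_insert.1 (hM₃t (h x hx.symm)) with rfl | hx₁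
    · rcases mem_insert.1 (hM₃t (h z hz.symm)) with rfl | hz₁
      exacts [hxz rfl, hzM₁ hz₁]
    · exact hxM₁ hx₁
  have := hHk _ (hM₃.insert_edge hu huM₃ hyM₃)
  rw [card_insert_of_notMem_coveredVertices _ huM₃] at this
  omega

end Maximal

section Cliques

variable {V : Type*} {H : SimpleGraph V}

lemma not_adj_of_isClique_neighborSet {y u z : V} (hu : H.IsClique (H.neighborSet u))
    (hyu : u = y ∨ H.Adj y u) (hyz : ¬(z = y ∨ H.Adj y z)) : ¬H.Adj u z := by
  intro huz
  rcases hyu with rfl | hyu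
  · exact hyz (.inr huz)
  · exact hyz (.inr (hu hyu.symm huz fun hyz' => hyz (.inl hyz'.symm)))

lemma exists_matching_of_isClique {C : Finset V}
    (hC : H.IsClique (C : Set V)) :
    ∃ M, IsMatchingFinset H M ∧ coveredVertices M ⊆ C ∧ #C ≤ 2 * #M + 1 := by
  induction C using Finset.strongInduction with
  | H C ih =>
  by_cases hC1 : #C ≤ 1
  · exact ⟨∅, .empty, by simp [coveredVertices], by omega⟩
  obtain ⟨x, hx, y, hy, hxy⟩ := one_lt_card.1 (not_le.1 hC1)
  have hyx : y ∈ C.erase x := mem_erase.2 ⟨hxy.symm, hy⟩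
  have hsub : (C.erase x).erase y ⊆ C := (erase_subset _ _).trans (erase_subset _ _)
  obtain ⟨M, hM, hMC, hcard⟩ :=
    ih _ ((erase_ssubset hyx).trans (erase_ssubset hx)) (hC.subset (coe_subset.2 hsub))
  have hxM : x ∉ coveredVertices M := fun h => by simpa using hMC h
  have hyM : y ∉ coveredVertices M := fun h => by simpa using hMC h
  refine ⟨_, hM.insert_edge (hC hx hy hxy) hxM hyM, ?_, ?_⟩
  · rw [coveredVertices_insert, insert_subset_iff, insert_subset_iff]
    exact ⟨hx, hy, hMC.trans hsub⟩
  · rw [card_insert_of_notMem_coveredVertices _ hxM]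
    have := card_erase_add_one hyx
    have := card_erase_add_one hx
    omega

end Cliques

lemma choose_two_two_mul_add_one (m : ℕ) : (2 * m + 1).choose 2 = m * (2 * m + 1) := by
  rw [Nat.choose_two_right, Nat.add_sub_cancel, mul_comm, mul_assoc,
    Nat.mul_div_cancel_left _ two_pos]

lemma choose_two_le_of_le_two_mul_add_one {c m k : ℕ} (hc : c ≤ 2 * m + 1) (hm : m ≤ k) :
    c.choose 2 ≤ (2 * k + 1) * m := by
  calc c.choose 2 ≤ (2 * m + 1).choose 2 := Nat.choose_le_choose 2 hc
    _ = m * (2 * m + 1) := choose_two_two_mul_add_one m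
    _ ≤ (2 * k + 1) * m := by nlinarith

lemma choose_two_add_mul_le_of_le_two_mul_add_one {c m k : ℕ} (h2 : 2 ≤ c) (hc : c ≤ 2 * m + 1)
    (hm : m ≤ k) : c.choose 2 + k * c ≤ 2 * (2 * k + 1) * m := by
  have hm1 : 1 ≤ m := by omega
  calc c.choose 2 + k * c ≤ m * (2 * m + 1) + k * (2 * m + 1) := by
        rw [← choose_two_two_mul_add_one]
        exact add_le_add (Nat.choose_le_choose 2 hc) (Nat.mul_le_mul_left k hc)
    _ ≤ 2 * (2 * k + 1) * m := by nlinarith [Nat.mul_le_mul hm1 hm]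

section EdgesWithin

variable {V : Type*} [Fintype V]

noncomputable def edgesWithin (G : SimpleGraph V) (C : Finset V) : Finset (Sym2 V) :=
  {e ∈ G.edgeFinset | ∀ v ∈ e, v ∈ C}

lemma mk_mem_edgesWithin {G : SimpleGraph V} {C : Finset V} {a b : V} :
    s(a, b) ∈ edgesWithin G C ↔ G.Adj a b ∧ a ∈ C ∧ b ∈ C := by
  simp [edgesWithin]

lemma edgesWithin_univ (G : SimpleGraph V) : edgesWithin G univ = G.edgeFinset := by
  simp [edgesWithin]

lemma edgesWithin_mono {G H : SimpleGraph V} (h : G ≤ H) (C : Finset V) :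
    edgesWithin G C ⊆ edgesWithin H C := by
  intro e he
  induction e using Sym2.ind with
  | _ a b =>
    rw [mk_mem_edgesWithin] at he ⊢
    exact ⟨h he.1, he.2⟩

lemma card_edgesWithin_le (G : SimpleGraph V) (C : Finset V) :
    #(edgesWithin G C) ≤ (#C).choose 2 := by
  rw [← Sym2.card_image_offDiag]
  refine card_le_card fun e he => ?_
  induction e using Sym2.ind with
  | _ a b =>
    obtain ⟨hab, ha, hb⟩ := mk_mem_edgesWithin.1 he
    exact mem_image.2 ⟨(a, b), mem_offDiag.2 ⟨ha, hb, hab.ne⟩, rfl⟩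

lemma card_edgesWithin_eq_add {G : SimpleGraph V} {C W : Finset V} (hCW : C ⊆ W)
    (hsep : ∀ u ∈ C, ∀ z ∈ W \ C, ¬G.Adj u z) :
    #(edgesWithin G W) = #(edgesWithin G C) + #(edgesWithin G (W \ C)) := by
  rw [← card_union_of_disjoint]
  · congr 1
    ext e
    induction e using Sym2.ind with
    | _ a b =>
      simp only [mem_union, mk_mem_edgesWithin, mem_sdiff]
      by_cases ha : a ∈ C <;> by_cases hb : b ∈ C
      · simp [ha, hb, hCW ha, hCW hb]
      · simp only [ha, hb]
        grind
      · simp only [ha, hb]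
        grind [G.adj_symm]
      · simp [ha, hb]
  · refine disjoint_left.2 fun e he he' => ?_
    induction e using Sym2.ind with
    | _ a b => exact (mem_sdiff.1 (mk_mem_edgesWithin.1 he').2.1).2 (mk_mem_edgesWithin.1 he).2.1

lemma card_edgeFinset_le_sum_degree_add (G : SimpleGraph V) (A : Finset V) :
    #G.edgeFinset ≤ ∑ a ∈ A, G.degree a + #(edgesWithin G Aᶜ) := by
  have hsub : G.edgeFinset ⊆ A.biUnion (fun a => G.incidenceFinset a) ∪ edgesWithin G Aᶜ := by
    intro e he
    induction e using Sym2.ind with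
    | _ a b =>
      have hab := G.mem_edgeFinset.1 he
      by_cases ha : a ∈ A
      · exact mem_union_left _ (mem_biUnion.2 ⟨a, ha, by simpa using hab⟩)
      by_cases hb : b ∈ A
      · rw [Sym2.eq_swap]
        exact mem_union_left _ (mem_biUnion.2 ⟨b, hb, by simpa using hab.symm⟩)
      · exact mem_union_right _ (mk_mem_edgesWithin.2 ⟨hab, by simpa, by simpa⟩)
  calc #G.edgeFinset ≤ #(A.biUnion (fun a => G.incidenceFinset a)) + #(edgesWithin G Aᶜ) :=
        (card_le_card hsub).trans (card_union_le _ _)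
    _ ≤ ∑ a ∈ A, G.degree a + #(edgesWithin G Aᶜ) := by
        gcongr
        exact card_biUnion_le.trans_eq (by simp)

lemma card_eq_and_eq_top_of_choose_two_le_card_edgeFinset {G : SimpleGraph V} {n : ℕ}
    (hn2 : 2 ≤ n) (hn : Fintype.card V ≤ n) (hE : n.choose 2 ≤ #G.edgeFinset) :
    Fintype.card V = n ∧ G = ⊤ := by
  have hV : Fintype.card V = n := by
    refine hn.antisymm (not_lt.1 fun hlt => ?_)
    obtain ⟨m, rfl⟩ : ∃ m, n = m + 1 := ⟨n - 1, by omega⟩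
    have := G.card_edgeFinset_le_card_choose_two.trans
      (Nat.choose_le_choose 2 (Nat.le_of_lt_succ hlt))
    have : (m + 1).choose 2 = m.choose 1 + m.choose 2 := Nat.choose_succ_succ' _ _
    rw [Nat.choose_one_right] at this
    omega
  refine ⟨hV, by_contra fun hG => ?_⟩
  have := card_lt_card (SimpleGraph.edgeFinset_strict_mono (lt_top_iff_ne_top.2 hG))
  rw [SimpleGraph.card_edgeFinset_top_eq_card_choose_two, hV] at this
  omega

end EdgesWithin

section Extremal

variable {V : Type*} [Fintype V] {H : SimpleGraph V} {k : ℕ}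

/-- Closed neighbourhoods peel `W` into cliques with no `H`-edges between them, and a clique `C`
carries a matching of size `m` with `#C ≤ 2m + 1 ≤ 2k + 1`. -/
theorem exists_matching_bounding_edgesWithin (hk : matchingNumber H ≤ k) (W : Finset V)
    (hW : ∀ y ∈ W, H.IsClique (H.neighborSet y)) :
    ∃ M, IsMatchingFinset H M ∧ coveredVertices M ⊆ W ∧
      #(edgesWithin H W) ≤ (2 * k + 1) * #M ∧
      ((∀ y ∈ W, ∃ z ∈ W, H.Adj y z) → #(edgesWithin H W) + k * #W ≤ 2 * (2 * k + 1) * #M) := by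
  induction W using Finset.strongInduction with
  | H W ih =>
  rcases W.eq_empty_or_nonempty with rfl | ⟨y, hy⟩
  · have := card_edgesWithin_le H ∅
    exact ⟨∅, .empty, by simp [coveredVertices], by simpa using this, by simpa using this⟩
  set C := {z ∈ W | z = y ∨ H.Adj y z}
  have hCW : C ⊆ W := filter_subset _ _
  have hyC : y ∈ C := mem_filter.2 ⟨hy, .inl rfl⟩
  have hclique : H.IsClique (C : Set V) :=
    (SimpleGraph.isClique_insert.2 ⟨hW y hy, fun _ hz _ => hz⟩).subset
      fun z hz => (mem_filter.1 hz).2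
  have hsep : ∀ u ∈ C, ∀ z ∈ W \ C, ¬H.Adj u z := fun u hu z hz =>
    not_adj_of_isClique_neighborSet (hW u (hCW hu)) (mem_filter.1 hu).2
      fun h => (mem_sdiff.1 hz).2 (mem_filter.2 ⟨(mem_sdiff.1 hz).1, h⟩)
  obtain ⟨MC, hMC, hMCC, hcMC⟩ := exists_matching_of_isClique hclique
  obtain ⟨M', hM', hM'W, hbound, hbound'⟩ :=
    ih (W \ C) (sdiff_ssubset hCW ⟨y, hyC⟩) fun z hz => hW z (mem_sdiff.1 hz).1
  have hdisj : Disjoint (coveredVertices MC) (coveredVertices M') :=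
    disjoint_of_subset_left hMCC (disjoint_of_subset_right hM'W disjoint_sdiff)
  have hMCk : #MC ≤ k := (card_le_matchingNumber hMC).trans hk
  have hCedges := card_edgesWithin_le H C
  refine ⟨MC ∪ M', hMC.union hM' hdisj,
    coveredVertices_union MC M' ▸ union_subset (hMCC.trans hCW) (hM'W.trans sdiff_subset),
    ?_, fun hnb => ?_⟩ <;>
    rw [card_edgesWithin_eq_add hCW hsep, card_union_of_disjoint_coveredVertices hdisj]
  · have := choose_two_le_of_le_two_mul_add_one hcMC hMCk
    nlinarith
  have hC2 : 2 ≤ #C := by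
    obtain ⟨z, hzW, hyz⟩ := hnb y hy
    exact one_lt_card.2 ⟨y, hyC, z, mem_filter.2 ⟨hzW, .inr hyz⟩, hyz.ne⟩
  have hnb' : ∀ z ∈ W \ C, ∃ u ∈ W \ C, H.Adj z u := by
    intro z hz
    obtain ⟨u, huW, hzu⟩ := hnb z (mem_sdiff.1 hz).1
    by_cases huC : u ∈ C
    · exact absurd hzu.symm (hsep u huC z hz)
    · exact ⟨u, mem_sdiff.2 ⟨huW, huC⟩, hzu⟩
  have := hbound' hnb'
  have := choose_two_add_mul_le_of_le_two_mul_add_one hC2 hcMC hMCk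
  rw [← card_sdiff_add_card_eq_card hCW]
  nlinarith

lemma exists_matching_extend_of_dominating {A : Finset V} (hA : ∀ a ∈ A, ∀ b, b ≠ a → H.Adj a b)
    {M : Finset (Sym2 V)} (hM : IsMatchingFinset H M) (hAM : Disjoint A (coveredVertices M))
    (hn : 2 * (#M + #A) ≤ Fintype.card V) : ∃ N, IsMatchingFinset H N ∧ #N = #M + #A := by
  induction A using Finset.induction_on generalizing M with
  | empty => exact ⟨M, hM, rfl⟩
  | insert a A ha ih =>
    rw [card_insert_of_notMem ha] at hn ⊢
    obtain ⟨b, hb⟩ : ∃ b, b ∉ insert a A ∪ coveredVertices M := by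
      by_contra! h
      have := card_le_card fun x (_ : x ∈ univ) => h x
      have := card_union_le (insert a A) (coveredVertices M)
      have := card_insert_le a A
      have := card_coveredVertices_le M
      rw [card_univ] at *
      omega
    simp only [mem_union, mem_insert, not_or] at hb
    have haM : a ∉ coveredVertices M := disjoint_left.1 hAM (mem_insert_self a A)
    have hM' := hM.insert_edge (hA a (mem_insert_self a A) b hb.1.1) haM hb.2
    have hAM' : Disjoint A (coveredVertices (insert s(a, b) M)) := by
      rw [coveredVertices_insert, disjoint_insert_right, disjoint_insert_right]
      exact ⟨ha, hb.1.2, disjoint_of_subset_left (subset_insert a A) hAM⟩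
    have hcard := card_insert_of_notMem_coveredVertices b haM
    obtain ⟨N, hN, hNc⟩ :=
      ih (fun a' ha' => hA a' (mem_insert_of_mem ha')) hM' hAM' (by omega)
    exact ⟨N, hN, by omega⟩

lemma card_add_card_le_of_dominating (hk : matchingNumber H ≤ k)
    (hn : 2 * k + 2 ≤ Fintype.card V) {A : Finset V} (hA : ∀ a ∈ A, ∀ b, b ≠ a → H.Adj a b)
    {M : Finset (Sym2 V)} (hM : IsMatchingFinset H M) (hAM : Disjoint A (coveredVertices M)) :
    #A + #M ≤ k := by
  by_contra! h
  have := (card_le_matchingNumber hM).trans hk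
  obtain ⟨A₀, hA₀A, hA₀⟩ := exists_subset_card_eq (show k + 1 - #M ≤ #A by omega)
  obtain ⟨N, hN, hNc⟩ := exists_matching_extend_of_dominating (fun a ha => hA a (hA₀A ha)) hM
    (disjoint_of_subset_left hA₀A hAM) (by omega)
  have := (card_le_matchingNumber hN).trans hk
  omega

theorem card_le_two_mul_add_one_of_le_card_edgeFinset {G : SimpleGraph V} (hk : 0 < k)
    (hdeg : ∀ v, 0 < G.degree v) (hν : matchingNumber G ≤ k) (hΔ : G.maxDegree ≤ 2 * k)
    (hE : k * (2 * k + 1) ≤ #G.edgeFinset) : Fintype.card V ≤ 2 * k + 1 := by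
  by_contra! hn
  obtain ⟨H, hGH, hH⟩ :=
    Finite.exists_le_maximal (p := fun H : SimpleGraph V => matchingNumber H ≤ k) hν
  have hHk := matchingNumber_le_iff.1 hH.prop
  set A : Finset V := {a | ∀ b, b ≠ a → H.Adj a b}
  have hB : ∀ y ∈ Aᶜ, H.IsClique (H.neighborSet y) := by
    intro y hy
    obtain ⟨w, hwy, hyw⟩ : ∃ w, w ≠ y ∧ ¬H.Adj y w := by simpa [A] using hy
    exact isClique_neighborSet_of_maximal hH hwy hyw
  obtain ⟨M, hM, hMA, hbound, hbound'⟩ := exists_matching_bounding_edgesWithin hH.prop Aᶜ hB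
  have hMk := hHk M hM
  have hGB := card_le_card (edgesWithin_mono hGH Aᶜ)
  rcases A.eq_empty_or_nonempty with hA₀ | hA₀
  · rw [hA₀, compl_empty] at hbound' hGB
    simp only [edgesWithin_univ] at hbound' hGB
    have := hbound' fun y _ =>
      let ⟨z, hz⟩ := (G.degree_pos_iff_exists_adj y).1 (hdeg y)
      ⟨z, mem_univ z, hGH hz⟩
    rw [card_univ] at this
    nlinarith
  have hAM : #A + #M ≤ k := card_add_card_le_of_dominating hH.prop hn
    (fun a ha => (mem_filter.1 ha).2) hM (disjoint_of_subset_right hMA disjoint_compl_right)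
  have hdegA : ∑ a ∈ A, G.degree a ≤ #A * (2 * k) :=
    sum_le_card_nsmul _ _ _ fun a _ => (G.degree_le_maxDegree a).trans hΔ
  have := card_edgeFinset_le_sum_degree_add G A
  have := hA₀.card_pos
  nlinarith

end Extremal

theorem stmt_4 {V : Type*} [Fintype V] (G : SimpleGraph V) (Δ : ℕ) (hΔ : 2 ≤ Δ)
    (heven : Even Δ)
    (hiso : ∀ v : V, 0 < G.degree v)
    (hν : matchingNumber G = Δ / 2)
    (hmax : G.maxDegree = Δ)
    (hE : G.edgeFinset.card = (Δ + 1) * Δ / 2) :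
    Nonempty (G ≃g (⊤ : SimpleGraph (Fin (Δ + 1)))) := by
  obtain ⟨k, rfl⟩ := heven
  have hE' : #G.edgeFinset = k * (2 * k + 1) := by
    rw [hE, show (k + k + 1) * (k + k) = k * (2 * k + 1) * 2 by ring, Nat.mul_div_cancel _ two_pos]
  have hn : Fintype.card V ≤ 2 * k + 1 :=
    card_le_two_mul_add_one_of_le_card_edgeFinset (by omega) hiso (hν.le.trans (by omega))
      (hmax.le.trans (by omega)) hE'.ge
  obtain ⟨hV, rfl⟩ := card_eq_and_eq_top_of_choose_two_le_card_edgeFinset (by omega) hn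
    (by rw [choose_two_two_mul_add_one, hE'])
  exact ⟨SimpleGraph.Iso.completeGraph (Fintype.equivFinOfCardEq (by omega))⟩
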